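/- The function U(T) = T·(√((T+1)/(3T+1)) + i) is differentiable on (-1/3, ∞), and for every T ∈ (-1/3, ∞) its derivative satisfies Im U'(T) = 1 and Re U'(T) ≥ 1/√3. -/

import Mathlib

/-- `U(T) = T(√((T+1)/(3T+1)) + i)`. -/
noncomputable def Ufun (T : ℝ) : ℂ :=
  (T : ℂ) * ((Real.sqrt ((T + 1) / (3 * T + 1)) : ℂ) + Complex.I)

/-! Writing `s = √((T+1)/(3T+1))`, `Re U'(T) = s + T s' = (3T² + 3T + 1) / ((3T+1)² s)`, and
`((3T+1)² s)² = (3T+1)³ (T+1)`. The bound `Re U' ≥ 1/√3` is therefore the polynomial inequality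
`(3T+1)³ (T+1) ≤ 3 (3T² + 3T + 1)²`, whose two sides differ by `9T² + 8T + 2 > 0`. -/

theorem HasDerivAt.ofReal_mul_ofReal_add_I {h : ℝ → ℝ} {h' T : ℝ} (hh : HasDerivAt h h' T) :
    HasDerivAt (fun t : ℝ => (t : ℂ) * ((h t : ℂ) + Complex.I))
      (((h T + T * h' : ℝ) : ℂ) + Complex.I) T := by
  have hid : HasDerivAt (fun t : ℝ => (t : ℂ)) 1 T := by
    simpa using (hasDerivAt_id T).ofReal_comp
  refine (hid.mul (hh.ofReal_comp.add_const Complex.I)).congr_deriv ?_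
  push_cast
  ring

theorem hasDerivAt_sqrt_div_three_mul_add_one {T : ℝ} (hT : -(1 : ℝ) / 3 < T) :
    HasDerivAt (fun t : ℝ => √((t + 1) / (3 * t + 1)))
      (-1 / ((3 * T + 1) ^ 2 * √((T + 1) / (3 * T + 1)))) T := by
  have hden : 3 * T + 1 ≠ 0 := by linarith
  have hratio : (T + 1) / (3 * T + 1) ≠ 0 := div_ne_zero (by linarith) hden
  have hf : HasDerivAt (fun t : ℝ => (t + 1) / (3 * t + 1)) (-2 / (3 * T + 1) ^ 2) T :=
    (((hasDerivAt_id T).add_const 1).div (((hasDerivAt_id T).const_mul 3).add_const 1)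
      hden).congr_deriv (by simp only [id]; ring)
  refine (hf.sqrt hratio).congr_deriv ?_
  field_simp

theorem sqrt_div_three_mul_add_one_add_mul_deriv {T : ℝ} (hT : -(1 : ℝ) / 3 < T) :
    √((T + 1) / (3 * T + 1)) + T * (-1 / ((3 * T + 1) ^ 2 * √((T + 1) / (3 * T + 1)))) =
      (3 * T ^ 2 + 3 * T + 1) / ((3 * T + 1) ^ 2 * √((T + 1) / (3 * T + 1))) := by
  have hden : 3 * T + 1 ≠ 0 := by linarith
  have hratio : 0 < (T + 1) / (3 * T + 1) := div_pos (by linarith) (by linarith)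
  set s := √((T + 1) / (3 * T + 1))
  have hx : (3 * T + 1) ^ 2 * s ≠ 0 :=
    mul_ne_zero (pow_ne_zero 2 hden) (Real.sqrt_pos.2 hratio).ne'
  have hs2 : s ^ 2 * (3 * T + 1) = T + 1 := by
    rw [Real.sq_sqrt hratio.le, div_mul_cancel₀ _ hden]
  rw [eq_div_iff hx, add_mul, mul_assoc, div_mul_cancel₀ _ hx]
  linear_combination (3 * T + 1) * hs2

theorem three_mul_add_one_pow_three_mul_le (T : ℝ) :
    (3 * T + 1) ^ 3 * (T + 1) ≤ 3 * (3 * T ^ 2 + 3 * T + 1) ^ 2 := by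
  nlinarith [sq_nonneg (9 * T + 4)]

theorem one_div_sqrt_three_le_div {T : ℝ} (hT : -(1 : ℝ) / 3 < T) :
    1 / √3 ≤ (3 * T ^ 2 + 3 * T + 1) / ((3 * T + 1) ^ 2 * √((T + 1) / (3 * T + 1))) := by
  have hden : 0 < 3 * T + 1 := by linarith
  have hratio : 0 < (T + 1) / (3 * T + 1) := div_pos (by linarith) hden
  have hnum : 0 < 3 * T ^ 2 + 3 * T + 1 := by nlinarith [sq_nonneg (2 * T + 1)]
  have hx : 0 < (3 * T + 1) ^ 2 * √((T + 1) / (3 * T + 1)) :=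
    mul_pos (pow_pos hden 2) (Real.sqrt_pos.2 hratio)
  have hx2 : ((3 * T + 1) ^ 2 * √((T + 1) / (3 * T + 1))) ^ 2 = (3 * T + 1) ^ 3 * (T + 1) := by
    rw [mul_pow, Real.sq_sqrt hratio.le]
    field_simp
  rw [div_le_div_iff₀ (Real.sqrt_pos.2 three_pos) hx, one_mul]
  refine le_of_sq_le_sq ?_ (mul_pos hnum (Real.sqrt_pos.2 three_pos)).le
  rw [hx2, mul_pow, Real.sq_sqrt (by norm_num : (0 : ℝ) ≤ 3), mul_comm _ 3]
  exact three_mul_add_one_pow_three_mul_le T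

theorem Ufun_hasDerivAt {T : ℝ} (hT : -(1 : ℝ) / 3 < T) :
    HasDerivAt Ufun
      (((3 * T ^ 2 + 3 * T + 1) / ((3 * T + 1) ^ 2 * √((T + 1) / (3 * T + 1))) : ℝ) +
        Complex.I) T := by
  rw [← sqrt_div_three_mul_add_one_add_mul_deriv hT]
  exact (hasDerivAt_sqrt_div_three_mul_add_one hT).ofReal_mul_ofReal_add_I

/-- `U` is differentiable on `(-1/3, ∞)` with `Im U'(T) = 1` and `Re U'(T) ≥ 1/√3`. -/
theorem Ufun_deriv_bounds :
    (∀ T ∈ Set.Ioi (-(1 : ℝ) / 3), DifferentiableAt ℝ Ufun T) ∧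
    ∀ T ∈ Set.Ioi (-(1 : ℝ) / 3),
      (deriv Ufun T).im = 1 ∧ 1 / Real.sqrt 3 ≤ (deriv Ufun T).re := by
  refine ⟨fun T hT => (Ufun_hasDerivAt hT).differentiableAt, fun T hT => ?_⟩
  rw [(Ufun_hasDerivAt hT).deriv]
  refine ⟨by simp only [Complex.add_im, Complex.ofReal_im, Complex.I_im, zero_add], ?_⟩
  simpa only [Complex.add_re, Complex.ofReal_re, Complex.I_re, add_zero] using
    one_div_sqrt_three_le_div hT
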